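/- The number π² + 1 is an eigenvalue of E(0, 0, 1/2, 0); indeed the 6th standard basis vector e₆ of ℂ⁷ satisfies E(0,0,1/2,0)·e₆ = (π² + 1)·e₆. On the other hand, π² + 1 is not an eigenvalue of any of the matrices E(1/2, 0, 0, 0), E(−1/2, 0, 0, 0), E(0, 1/2, 0, 0), E(0, −1/2, 0, 0), E(0, 0, 0, 1/2), E(0, 0, 0, −1/2). -/

import Mathlib

/-!
For μ = 4π²S² + 1 the diagonal of `E − μ` is `(−1, −1, −1, −1, 1, 0, 2)` whatever the parameters,
so `E v = μ v` is a sparse linear system whose other coefficients are `2πi` times a parameter.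
With only `B₁` nonzero, `e₆` solves it. With a single nonzero parameter `a` among `A₁, A₂, B₂`,
some equations read `2πia · vⱼ = 0`, and eliminating variables in the others leaves a coordinate
multiplied by `1 + 4π²a²` or `1 + 2π²a²`, nonzero because `(2πia)² = −4π²a²` is negative.
Since `π² + 1 = 4π²(±1/2)² + 1`, the theorem is the case `a = ±1/2`.
-/

noncomputable section

/-- The 7×7 complex matrix E(A₁,A₂,B₁,B₂) from the one-form spectrum computation
on Example III, where S² = A₁² + A₂² + B₁² + B₂². -/
def Emat (A1 A2 B1 B2 : ℝ) : Matrix (Fin 7) (Fin 7) ℂ :=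
  let p : ℂ := (Real.pi : ℂ)
  let i : ℂ := Complex.I
  let S2 : ℂ := ((A1 ^ 2 + A2 ^ 2 + B1 ^ 2 + B2 ^ 2 : ℝ) : ℂ)
  let a1 : ℂ := (A1 : ℂ)
  let a2 : ℂ := (A2 : ℂ)
  let b1 : ℂ := (B1 : ℂ)
  let b2 : ℂ := (B2 : ℂ)
  !![4*p^2*S2, 0, 0, 0, -2*p*i*b1, -2*p*i*b2, 0;
     0, 4*p^2*S2, 0, 0, -2*p*i*b2, 0, 0;
     0, 0, 4*p^2*S2, 0, 2*p*i*a1, 0, -2*p*i*b2;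
     0, 0, 0, 4*p^2*S2, 2*p*i*a2, 2*p*i*a1, 2*p*i*b1;
     2*p*i*b1, 2*p*i*b2, -2*p*i*a1, -2*p*i*a2, 4*p^2*S2 + 2, 0, 2*p*i*a1;
     2*p*i*b2, 0, 0, -2*p*i*a1, 0, 4*p^2*S2 + 1, 2*p*i*a2;
     0, 0, 2*p*i*b2, -2*p*i*b1, -2*p*i*a1, -2*p*i*a2, 4*p^2*S2 + 3]

open Complex Matrix Real

theorem Emat_mulVec_eq_smul_iff (A1 A2 B1 B2 : ℝ) (v : Fin 7 → ℂ) :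
    Emat A1 A2 B1 B2 *ᵥ v = (4 * π ^ 2 * ((A1 ^ 2 + A2 ^ 2 + B1 ^ 2 + B2 ^ 2 : ℝ) : ℂ) + 1) • v ↔
      v 0 + 2 * π * I * (B1 * v 4 + B2 * v 5) = 0 ∧
      v 1 + 2 * π * I * B2 * v 4 = 0 ∧
      v 2 = 2 * π * I * (A1 * v 4 - B2 * v 6) ∧
      v 3 = 2 * π * I * (A2 * v 4 + A1 * v 5 + B1 * v 6) ∧
      v 4 + 2 * π * I * (B1 * v 0 + B2 * v 1 - A1 * v 2 - A2 * v 3 + A1 * v 6) = 0 ∧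
      2 * π * I * (B2 * v 0 - A1 * v 3 + A2 * v 6) = 0 ∧
      2 * v 6 + 2 * π * I * (B2 * v 2 - B1 * v 3 - A1 * v 4 - A2 * v 5) = 0 := by
  simp only [funext_iff, Fin.forall_fin_succ, IsEmpty.forall_iff, and_true, Emat, mulVec,
    dotProduct, Fin.sum_univ_seven, of_apply, cons_val', cons_val, cons_val_fin_one, cons_val_zero,
    cons_val_one, Fin.succ_zero_eq_one, Fin.succ_one_eq_two, Fin.reduceSucc,
    Pi.smul_apply, smul_eq_mul]
  constructor <;> rintro ⟨h0, h1, h2, h3, h4, h5, h6⟩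
  all_goals exact ⟨by linear_combination -h0, by linear_combination -h1,
    by linear_combination -h2, by linear_combination -h3, by linear_combination h4,
    by linear_combination h5, by linear_combination h6⟩

theorem eq_zero_of_Emat_A₁_mulVec_eq_smul {a : ℝ} (ha : a ≠ 0) {v : Fin 7 → ℂ}
    (h : Emat a 0 0 0 *ᵥ v = (4 * π ^ 2 * a ^ 2 + 1 : ℂ) • v) : v = 0 := by
  have hsys := (Emat_mulVec_eq_smul_iff a 0 0 0 v).1 (by convert h using 3; push_cast; ring)
  simp only [ofReal_zero] at hsys
  obtain ⟨h0, h1, h2, h3, h4, h5, h6⟩ := hsys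
  have hτa : 2 * π * I * a ≠ 0 := by simp [ha, pi_ne_zero]
  have hpos : (1 + 2 * π ^ 2 * a ^ 2 : ℂ) ≠ 0 := by
    exact_mod_cast (by positivity : (0 : ℝ) < 1 + 2 * π ^ 2 * a ^ 2).ne'
  have hv0 : v 0 = 0 := by linear_combination h0
  have hv1 : v 1 = 0 := by linear_combination h1
  have hv3 : v 3 = 0 := mul_left_cancel₀ hτa (by linear_combination -h5)
  have hv5 : v 5 = 0 := mul_left_cancel₀ hτa (by linear_combination -h3 + hv3)
  have hv4 : v 4 = 0 := mul_left_cancel₀ hpos <| by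
    linear_combination h4 + 2 * π * I * a * h2 - π * I * a * h6 + 2 * π ^ 2 * a ^ 2 * v 4 * I_sq
  have hv2 : v 2 = 0 := by linear_combination h2 + 2 * π * I * a * hv4
  have hv6 : v 6 = 0 := by linear_combination h6 / 2 + π * I * a * hv4
  ext i; fin_cases i <;> assumption

theorem eq_zero_of_Emat_A₂_mulVec_eq_smul {a : ℝ} (ha : a ≠ 0) {v : Fin 7 → ℂ}
    (h : Emat 0 a 0 0 *ᵥ v = (4 * π ^ 2 * a ^ 2 + 1 : ℂ) • v) : v = 0 := by
  have hsys := (Emat_mulVec_eq_smul_iff 0 a 0 0 v).1 (by convert h using 3; push_cast; ring)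
  simp only [ofReal_zero] at hsys
  obtain ⟨h0, h1, h2, h3, h4, h5, h6⟩ := hsys
  have hτa : 2 * π * I * a ≠ 0 := by simp [ha, pi_ne_zero]
  have hpos : (1 + 4 * π ^ 2 * a ^ 2 : ℂ) ≠ 0 := by
    exact_mod_cast (by positivity : (0 : ℝ) < 1 + 4 * π ^ 2 * a ^ 2).ne'
  have hv0 : v 0 = 0 := by linear_combination h0
  have hv1 : v 1 = 0 := by linear_combination h1
  have hv2 : v 2 = 0 := by linear_combination h2
  have hv4 : v 4 = 0 := mul_left_cancel₀ hpos <| by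
    linear_combination h4 + 2 * π * I * a * h3 + 4 * π ^ 2 * a ^ 2 * v 4 * I_sq
  have hv3 : v 3 = 0 := by linear_combination h3 + 2 * π * I * a * hv4
  have hv6 : v 6 = 0 := mul_left_cancel₀ hτa (by linear_combination h5)
  have hv5 : v 5 = 0 := mul_left_cancel₀ hτa (by linear_combination -h6 + 2 * hv6)
  ext i; fin_cases i <;> assumption

theorem eq_zero_of_Emat_B₂_mulVec_eq_smul {b : ℝ} (hb : b ≠ 0) {v : Fin 7 → ℂ}
    (h : Emat 0 0 0 b *ᵥ v = (4 * π ^ 2 * b ^ 2 + 1 : ℂ) • v) : v = 0 := by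
  have hsys := (Emat_mulVec_eq_smul_iff 0 0 0 b v).1 (by convert h using 3; push_cast; ring)
  simp only [ofReal_zero] at hsys
  obtain ⟨h0, h1, h2, h3, h4, h5, h6⟩ := hsys
  have hτb : 2 * π * I * b ≠ 0 := by simp [hb, pi_ne_zero]
  have hpos₁ : (1 + 4 * π ^ 2 * b ^ 2 : ℂ) ≠ 0 := by
    exact_mod_cast (by positivity : (0 : ℝ) < 1 + 4 * π ^ 2 * b ^ 2).ne'
  have hpos₂ : (1 + 2 * π ^ 2 * b ^ 2 : ℂ) ≠ 0 := by
    exact_mod_cast (by positivity : (0 : ℝ) < 1 + 2 * π ^ 2 * b ^ 2).ne'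
  have hv3 : v 3 = 0 := by linear_combination h3
  have hv0 : v 0 = 0 := mul_left_cancel₀ hτb (by linear_combination h5)
  have hv5 : v 5 = 0 := mul_left_cancel₀ hτb (by linear_combination h0 - hv0)
  have hv4 : v 4 = 0 := mul_left_cancel₀ hpos₁ <| by
    linear_combination h4 - 2 * π * I * b * h1 + 4 * π ^ 2 * b ^ 2 * v 4 * I_sq
  have hv1 : v 1 = 0 := by linear_combination h1 - 2 * π * I * b * hv4
  have hv6 : v 6 = 0 := mul_left_cancel₀ hpos₂ <| by
    linear_combination (h6 - 2 * π * I * b * h2) / 2 + 2 * π ^ 2 * b ^ 2 * v 6 * I_sq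
  have hv2 : v 2 = 0 := by linear_combination h2 - 2 * π * I * b * hv6
  ext i; fin_cases i <;> assumption

theorem Emat_B₁_mulVec_single_five (b : ℝ) :
    Emat 0 0 b 0 *ᵥ Pi.single 5 1 = (4 * π ^ 2 * b ^ 2 + 1 : ℂ) • Pi.single 5 1 := by
  convert (Emat_mulVec_eq_smul_iff 0 0 b 0 (Pi.single 5 1)).2 (by simp) using 3
  push_cast; ring

/-- π² + 1 is an eigenvalue of E(0,0,1/2,0), with eigenvector the 6th standard basis
vector e₆ of ℂ⁷; but π² + 1 is not an eigenvalue of E(±1/2,0,0,0), E(0,±1/2,0,0),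
or E(0,0,0,±1/2). -/
theorem stmt16 :
    (Emat 0 0 (1/2) 0).mulVec (Pi.single 5 1) =
      ((Real.pi : ℂ) ^ 2 + 1) • (Pi.single 5 1 : Fin 7 → ℂ) ∧
    (Pi.single 5 1 : Fin 7 → ℂ) ≠ 0 ∧
    (∀ v : Fin 7 → ℂ,
      (Emat (1/2) 0 0 0).mulVec v = ((Real.pi : ℂ) ^ 2 + 1) • v → v = 0) ∧
    (∀ v : Fin 7 → ℂ,
      (Emat (-(1/2)) 0 0 0).mulVec v = ((Real.pi : ℂ) ^ 2 + 1) • v → v = 0) ∧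
    (∀ v : Fin 7 → ℂ,
      (Emat 0 (1/2) 0 0).mulVec v = ((Real.pi : ℂ) ^ 2 + 1) • v → v = 0) ∧
    (∀ v : Fin 7 → ℂ,
      (Emat 0 (-(1/2)) 0 0).mulVec v = ((Real.pi : ℂ) ^ 2 + 1) • v → v = 0) ∧
    (∀ v : Fin 7 → ℂ,
      (Emat 0 0 0 (1/2)).mulVec v = ((Real.pi : ℂ) ^ 2 + 1) • v → v = 0) ∧
    (∀ v : Fin 7 → ℂ,
      (Emat 0 0 0 (-(1/2))).mulVec v = ((Real.pi : ℂ) ^ 2 + 1) • v → v = 0) := by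
  have hμ : ∀ a : ℝ, a ^ 2 = 1 / 4 → (π : ℂ) ^ 2 + 1 = 4 * π ^ 2 * a ^ 2 + 1 := fun a ha => by
    rw [← ofReal_pow a, ha]; push_cast; ring
  have hhalf : (1 / 2 : ℝ) ^ 2 = 1 / 4 := by norm_num
  have hhalf' : (-(1 / 2) : ℝ) ^ 2 = 1 / 4 := by norm_num
  refine ⟨hμ _ hhalf ▸ Emat_B₁_mulVec_single_five _, Pi.single_ne_zero_iff.2 one_ne_zero,
    fun v h => ?_, fun v h => ?_, fun v h => ?_, fun v h => ?_, fun v h => ?_, fun v h => ?_⟩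
  · exact eq_zero_of_Emat_A₁_mulVec_eq_smul (by norm_num) (hμ _ hhalf ▸ h)
  · exact eq_zero_of_Emat_A₁_mulVec_eq_smul (by norm_num) (hμ _ hhalf' ▸ h)
  · exact eq_zero_of_Emat_A₂_mulVec_eq_smul (by norm_num) (hμ _ hhalf ▸ h)
  · exact eq_zero_of_Emat_A₂_mulVec_eq_smul (by norm_num) (hμ _ hhalf' ▸ h)
  · exact eq_zero_of_Emat_B₂_mulVec_eq_smul (by norm_num) (hμ _ hhalf ▸ h)
  · exact eq_zero_of_Emat_B₂_mulVec_eq_smul (by norm_num) (hμ _ hhalf' ▸ h)
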